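/- arXiv:2503.21547 — 11 statements merged into one kernel-verified Lean document; each statement's English description precedes it below -/
import Mathlib

section
/- If an element a of a ring R is strongly weakly nil-clean (i.e., a = q + e or a = q - e for some nilpotent q and idempotent e with qe = eq), then -a is strongly weakly clean (i.e., -a can be written as u + f or u - f for a unit u and idempotent f with uf = fu). -/
/-- An element is strongly weakly nil-clean. -/
def IsSWNC {R : Type*} [Ring R] (a : R) : Prop :=
  ∃ q e : R, IsNilpotent q ∧ IsIdempotentElem e ∧ Commute q e ∧ (a = q + e ∨ a = q - e)

/-- A ring is GSWNC if every non-unit is strongly weakly nil-clean. -/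
def IsGSWNC (R : Type*) [Ring R] : Prop :=
  ∀ a : R, ¬ IsUnit a → IsSWNC a

/-! Write `f = 1 - e`. If `a = q + e` then `-a = -(1 + q) + f`, and if `a = q - e` then
`-a = (2e - 1 - q) + f`; here `1 + q` is a unit because `q` is nilpotent, and `2e - 1 - q` is a
unit because `2e - 1` squares to `1` and commutes with the nilpotent `q`. -/

theorem IsIdempotentElem.two_mul_sub_one_mul_self {R : Type*} [Ring R] {e : R}
    (he : IsIdempotentElem e) : (2 * e - 1) * (2 * e - 1) = 1 := by
  have hee : e * e = e := he.eq
  calc (2 * e - 1) * (2 * e - 1) = 4 * (e * e) - 4 * e + 1 := by noncomm_ring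
    _ = 1 := by rw [hee]; abel

theorem IsIdempotentElem.isUnit_two_mul_sub_one {R : Type*} [Ring R] {e : R}
    (he : IsIdempotentElem e) : IsUnit (2 * e - 1) :=
  ⟨⟨_, _, he.two_mul_sub_one_mul_self, he.two_mul_sub_one_mul_self⟩, rfl⟩

theorem stmt0 {R : Type*} [Ring R] (a : R) (h : IsSWNC a) :
    ∃ u f : R, IsUnit u ∧ IsIdempotentElem f ∧ Commute u f ∧ (-a = u + f ∨ -a = u - f) := by
  obtain ⟨q, e, hq, he, hqe, ha⟩ := h
  have hqf : Commute q (1 - e) := (Commute.one_right q).sub_right hqe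
  rcases ha with rfl | rfl
  · refine ⟨-(1 + q), 1 - e, hq.isUnit_one_add.neg, he.one_sub, ?_, Or.inl (by abel)⟩
    exact ((Commute.one_left _).add_left hqf).neg_left
  · have hef : Commute e (1 - e) := (Commute.one_right e).sub_right (Commute.refl e)
    have hq2e : Commute (-q) (2 * e - 1) :=
      (((Commute.ofNat_right q 2).mul_right hqe).sub_right (Commute.one_right q)).neg_left
    refine ⟨2 * e - 1 + -q, 1 - e, hq.neg.isUnit_add_left_of_commute he.isUnit_two_mul_sub_one hq2e,
      he.one_sub, ?_, Or.inl (by noncomm_ring)⟩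
    exact (((Commute.ofNat_left 2 _).mul_left hef).sub_left (Commute.one_left _)).add_left hqf.neg_left
end

section
/- If R is a GSWNC ring, then the Jacobson radical J(R) is a nil ideal. -/
/-!
An element `x = q ± e` of the Jacobson radical has `1 - e = (1 ∓ x) ± q` invertible, as a unit
plus a nilpotent commuting with it. An idempotent `e` with `1 - e` invertible vanishes, since `1 - e`
is an invertible idempotent; so `x = q`. A unit lying in the Jacobson radical forces `J(R) = R`,
hence `R = 0`.
-/

open Ideal

section

variable {R : Type*} [Ring R]

lemma IsIdempotentElem.eq_zero_of_isUnit_one_sub {e : R}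
    (he : IsIdempotentElem e) (hu : IsUnit (1 - e)) : e = 0 :=
  sub_eq_self.mp ((IsIdempotentElem.iff_eq_one_of_isUnit hu).mp he.one_sub)

lemma exists_mul_one_add_eq_one_of_mem_jacobson_bot {x : R}
    (hx : x ∈ jacobson (⊥ : Ideal R)) : ∃ z, z * (1 + x) = 1 := by
  obtain ⟨z, hz⟩ := mem_jacobson_iff.mp hx 1
  refine ⟨z, ?_⟩
  rw [mem_bot, sub_eq_zero, mul_one] at hz
  rw [mul_add, mul_one, add_comm, hz]

lemma isUnit_one_add_of_mem_jacobson_bot {x : R}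
    (hx : x ∈ jacobson (⊥ : Ideal R)) : IsUnit (1 + x) := by
  obtain ⟨z, hz⟩ := exists_mul_one_add_eq_one_of_mem_jacobson_bot hx
  -- `z = 1 - z * x` has a left inverse too, since `z * x` lies in the radical
  have hz' : z = 1 + -(z * x) := by
    rw [← sub_eq_add_neg, eq_sub_iff_add_eq, ← mul_one_add, hz]
  obtain ⟨w, hw⟩ := exists_mul_one_add_eq_one_of_mem_jacobson_bot
    (neg_mem (mul_mem_left _ z hx))
  rw [← hz'] at hw
  have hwx : w = 1 + x := left_inv_eq_right_inv hw hz
  exact ⟨⟨1 + x, z, hwx ▸ hw, hz⟩, rfl⟩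

lemma isUnit_one_add_sub_of_mem_jacobson_bot {x q : R}
    (hx : x ∈ jacobson (⊥ : Ideal R)) (hq : IsNilpotent q) (hqx : Commute q x) :
    IsUnit (1 + (x - q)) := by
  have hcomm : Commute (-q) (1 + x) := (Commute.one_right _).add_right hqx.neg_left
  convert hq.neg.isUnit_add_left_of_commute (isUnit_one_add_of_mem_jacobson_bot hx) hcomm using 1
  abel

lemma eq_zero_of_isUnit_of_mem_jacobson_bot {x : R}
    (hx : x ∈ jacobson (⊥ : Ideal R)) (hu : IsUnit x) : x = 0 := by
  have htop : jacobson (⊥ : Ideal R) = ⊤ := eq_top_of_isUnit_mem _ hx hu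
  rw [jacobson_eq_top_iff] at htop
  exact mem_bot.mp (htop ▸ Submodule.mem_top)

lemma IsSWNC.isNilpotent_of_mem_jacobson_bot {x : R} (hswnc : IsSWNC x)
    (hx : x ∈ jacobson (⊥ : Ideal R)) : IsNilpotent x := by
  obtain ⟨q, e, hq, he, hqe, rfl | rfl⟩ := hswnc
  · have hu : IsUnit (1 - e) := by
      simpa [sub_eq_add_neg, add_comm] using isUnit_one_add_sub_of_mem_jacobson_bot
        (neg_mem hx) hq.neg (((Commute.refl q).add_right hqe).neg_left.neg_right)
    simpa [he.eq_zero_of_isUnit_one_sub hu] using hq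
  · have hu : IsUnit (1 - e) := by
      simpa [sub_eq_add_neg] using
        isUnit_one_add_sub_of_mem_jacobson_bot hx hq ((Commute.refl q).sub_right hqe)
    simpa [he.eq_zero_of_isUnit_one_sub hu] using hq

end

theorem stmt2 {R : Type*} [Ring R] (h : IsGSWNC R) :
    ∀ x ∈ Ideal.jacobson (⊥ : Ideal R), IsNilpotent x := by
  intro x hx
  by_cases hux : IsUnit x
  · rw [eq_zero_of_isUnit_of_mem_jacobson_bot hx hux]
    exact IsNilpotent.zero
  · exact (h x hux).isNilpotent_of_mem_jacobson_bot hx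
end

section
/- A ring R is GSWNC if and only if for every non-unit a in R, either a + a² is nilpotent or a - a² is nilpotent. -/
/-!
If `a = q ± e` with `q` nilpotent, `e` idempotent and `q e = e q`, then `a ∓ a²` is `q` times an
element commuting with `q`, hence nilpotent. Conversely, if `a - a²` is nilpotent, the idempotent
`e = 1 - (1 - aⁿ)ⁿ` is a polynomial in `a` and agrees with `a` modulo the nilradical of the
commutative ring generated by `a`, so `a = (a - e) + e`; the case of `a + a²` follows by passing
to `-a`. The equivalence thus holds element by element, units included.
-/

theorem exists_isIdempotentElem_isNilpotent_sub_of_isNilpotent_sub_sq {S : Type*} [CommRing S]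
    {a : S} (h : IsNilpotent (a - a ^ 2)) :
    ∃ e : S, IsIdempotentElem e ∧ IsNilpotent (a - e) := by
  obtain ⟨n, hn⟩ := h
  have hn' : (a - a ^ 2) ^ (n + 1) = 0 := by rw [pow_succ, hn, zero_mul]
  refine ⟨_, isIdempotentElem_one_sub_one_sub_pow_pow a (n + 1) hn', ?_⟩
  let π := Ideal.Quotient.mk (nilradical S)
  have hπa : IsIdempotentElem (π a) := by
    rw [IsIdempotentElem, ← pow_two, eq_comm, ← sub_eq_zero, ← map_pow, ← map_sub,
      Ideal.Quotient.eq_zero_iff_mem]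
    exact ⟨n, hn⟩
  rw [← mem_nilradical, ← Ideal.Quotient.eq_zero_iff_mem, map_sub, sub_eq_zero]
  simp only [π, map_sub, map_one, map_pow, hπa.pow_succ_eq, hπa.one_sub.pow_succ_eq,
    sub_sub_cancel]

open scoped IsMulCommutative in
theorem exists_isIdempotentElem_commute_isNilpotent_sub_of_isNilpotent_sub_sq {R : Type*} [Ring R]
    {a : R} (h : IsNilpotent (a - a ^ 2)) :
    ∃ e : R, IsIdempotentElem e ∧ Commute a e ∧ IsNilpotent (a - e) := by
  let S := Subring.closure {a}
  have : IsMulCommutative S := Subring.isMulCommutative_closure (by simp)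
  let a' : S := ⟨a, Subring.subset_closure rfl⟩
  have h' : IsNilpotent (a' - a' ^ 2) := by
    obtain ⟨n, hn⟩ := h
    exact ⟨n, Subtype.ext hn⟩
  obtain ⟨e, he, hae⟩ := exists_isIdempotentElem_isNilpotent_sub_of_isNilpotent_sub_sq h'
  exact ⟨e, he.map S.subtype, (Commute.all a' e).map S.subtype, hae.map S.subtype⟩

section

variable {R : Type*} [Ring R]

theorem isNilpotent_add_sq_iff_neg (a : R) :
    IsNilpotent (a + a ^ 2) ↔ IsNilpotent (-a - (-a) ^ 2) := by
  rw [neg_sq, ← neg_add', isNilpotent_neg_iff]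

theorem Commute.isNilpotent_sub_sq_add {q e : R} (hqe : Commute q e) (hq : IsNilpotent q)
    (he : IsIdempotentElem e) : IsNilpotent ((q + e) - (q + e) ^ 2) := by
  have key : (q + e) - (q + e) ^ 2 = q * (1 - q - 2 * e) := by
    rw [sq, add_mul, mul_add, mul_add, he.eq, ← hqe.eq]
    noncomm_ring
  rw [key]
  exact (((Commute.one_right q).sub_right (Commute.refl q)).sub_right
    ((Commute.ofNat_right q 2).mul_right hqe)).isNilpotent_mul_right hq

theorem isSWNC_iff (a : R) : IsSWNC a ↔ IsNilpotent (a + a ^ 2) ∨ IsNilpotent (a - a ^ 2) := by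
  constructor
  · rintro ⟨q, e, hq, he, hqe, rfl | rfl⟩
    · exact .inr (hqe.isNilpotent_sub_sq_add hq he)
    · rw [isNilpotent_add_sq_iff_neg, neg_sub', sub_neg_eq_add]
      exact .inl (hqe.neg_left.isNilpotent_sub_sq_add hq.neg he)
  · rintro (h | h)
    · obtain ⟨e, he, hae, hn⟩ :=
        exists_isIdempotentElem_commute_isNilpotent_sub_of_isNilpotent_sub_sq
          ((isNilpotent_add_sq_iff_neg a).mp h)
      have hq : -(-a - e) = a + e := by abel
      exact ⟨a + e, e, hq ▸ hn.neg, he, hq ▸ (hae.sub_left (Commute.refl e)).neg_left,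
        .inr (add_sub_cancel_right a e).symm⟩
    · obtain ⟨e, he, hae, hn⟩ :=
        exists_isIdempotentElem_commute_isNilpotent_sub_of_isNilpotent_sub_sq h
      exact ⟨a - e, e, hn, he, hae.sub_left (Commute.refl e), .inl (sub_add_cancel a e).symm⟩

end

theorem stmt3 {R : Type*} [Ring R] :
    IsGSWNC R ↔ ∀ a : R, ¬ IsUnit a → (IsNilpotent (a + a ^ 2) ∨ IsNilpotent (a - a ^ 2)) :=
  forall_congr' fun a => imp_congr_right fun _ => isSWNC_iff a
end

section
/- Every GSWNC ring is strongly π-regular: for every a in R there exists n ∈ ℕ such that aⁿ ∈ aⁿ⁺¹R. -/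
/-!
For `a = q + e` with `q` nilpotent, `e` idempotent and `qe = eq`, the element `a` acts as the
nilpotent `q` on `(1 - e)R`, so `aⁿ = aⁿe` for large `n`, and as the unit `1 + q` on `eR`, so
`ea = e(1 + q)`. Together, `aⁿ = aⁿe(1 + q)(1 + q)⁻¹ = aⁿ⁺¹(1 + q)⁻¹`.
The case `a = q - e` reduces to this one through `-a = (-q) + e`.
-/

section

variable {R : Type*} [Ring R]

def IsStronglyPiRegular (a : R) : Prop :=
  ∃ n : ℕ, ∃ r : R, a ^ n = a ^ (n + 1) * r

theorem IsUnit.isStronglyPiRegular {a : R} (ha : IsUnit a) : IsStronglyPiRegular a := by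
  obtain ⟨u, rfl⟩ := ha
  exact ⟨0, ↑u⁻¹, by rw [pow_zero, zero_add, pow_one, Units.mul_inv]⟩

theorem IsStronglyPiRegular.of_neg {a : R} (h : IsStronglyPiRegular (-a)) :
    IsStronglyPiRegular a := by
  obtain ⟨n, r, hn⟩ := h
  refine ⟨n, -r, ?_⟩
  rcases Nat.even_or_odd n with hn_even | hn_odd
  · rw [hn_even.neg_pow, hn_even.add_one.neg_pow] at hn
    rw [hn, neg_mul, mul_neg]
  · rw [hn_odd.neg_pow, hn_odd.add_one.neg_pow] at hn
    rw [mul_neg, ← hn, neg_neg]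

theorem add_pow_succ_mul_eq_self_of_pow_eq_zero {q e : R} {n : ℕ}
    (hq : q ^ n = 0) (he : IsIdempotentElem e) (hqe : Commute q e) :
    (q + e) ^ (n + 1) * e = (q + e) ^ (n + 1) := by
  have h_comm : Commute (q + e) (1 - e) :=
    (Commute.one_right _).sub_right (hqe.add_left (Commute.refl e))
  have h_restrict : (q + e) * (1 - e) = q * (1 - e) := by
    rw [add_mul, he.mul_one_sub_self, add_zero]
  have h_kill : (q + e) ^ (n + 1) * (1 - e) = 0 := by
    calc (q + e) ^ (n + 1) * (1 - e) = ((q + e) * (1 - e)) ^ (n + 1) := by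
          rw [h_comm.mul_pow, he.one_sub.pow_succ_eq]
      _ = q ^ (n + 1) * (1 - e) := by
          rw [h_restrict, ((Commute.one_right q).sub_right hqe).mul_pow,
            he.one_sub.pow_succ_eq]
      _ = 0 := by rw [pow_succ, hq, zero_mul, zero_mul]
  rwa [mul_sub, mul_one, sub_eq_zero, eq_comm] at h_kill

theorem isStronglyPiRegular_add_of_isNilpotent_of_isIdempotentElem {q e : R}
    (hq : IsNilpotent q) (he : IsIdempotentElem e) (hqe : Commute q e) :
    IsStronglyPiRegular (q + e) := by
  obtain ⟨u, hu⟩ := hq.isUnit_add_one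
  obtain ⟨n, hn⟩ := hq
  have h_absorb := add_pow_succ_mul_eq_self_of_pow_eq_zero hn he hqe
  have h_unit_on_e : e * (q + e) = e * u := by
    rw [hu, mul_add, mul_add, mul_one, he.eq]
  refine ⟨n + 1, ↑u⁻¹, ?_⟩
  calc (q + e) ^ (n + 1) = (q + e) ^ (n + 1) * (e * u * ↑u⁻¹) := by
        rw [mul_assoc e, Units.mul_inv, mul_one, h_absorb]
    _ = (q + e) ^ (n + 1) * e * (q + e) * ↑u⁻¹ := by
        rw [← h_unit_on_e, mul_assoc, mul_assoc, mul_assoc]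
    _ = (q + e) ^ (n + 1 + 1) * ↑u⁻¹ := by rw [h_absorb, ← pow_succ]

theorem IsSWNC.isStronglyPiRegular {a : R} (ha : IsSWNC a) : IsStronglyPiRegular a := by
  obtain ⟨q, e, hq, he, hqe, rfl | rfl⟩ := ha
  · exact isStronglyPiRegular_add_of_isNilpotent_of_isIdempotentElem hq he hqe
  · refine IsStronglyPiRegular.of_neg ?_
    rw [neg_sub, sub_eq_neg_add]
    exact isStronglyPiRegular_add_of_isNilpotent_of_isIdempotentElem hq.neg he hqe.neg_left

end

theorem stmt4 {R : Type*} [Ring R] (h : IsGSWNC R) :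
    ∀ a : R, ∃ n : ℕ, ∃ r : R, a ^ n = a ^ (n + 1) * r := by
  intro a
  by_cases ha : IsUnit a
  · exact ha.isStronglyPiRegular
  · exact (h a ha).isStronglyPiRegular
end

section
/- A ring R is GSWNC if and only if J(R) is nil and R/J(R) is GSWNC. -/
open Polynomial

section

variable {R S : Type*} [Ring R] [Ring S]

def IsStronglyNilClean (a : R) : Prop :=
  ∃ q e : R, IsNilpotent q ∧ IsIdempotentElem e ∧ Commute q e ∧ a = q + e

theorem isSWNC_iff_isStronglyNilClean {a : R} :
    IsSWNC a ↔ IsStronglyNilClean a ∨ IsStronglyNilClean (-a) := by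
  constructor
  · rintro ⟨q, e, hq, he, hqe, rfl | rfl⟩
    · exact .inl ⟨q, e, hq, he, hqe, rfl⟩
    · exact .inr ⟨-q, e, hq.neg, he, hqe.neg_left, by abel⟩
  · rintro (⟨q, e, hq, he, hqe, rfl⟩ | ⟨q, e, hq, he, hqe, h⟩)
    · exact ⟨q, e, hq, he, hqe, .inl rfl⟩
    · exact ⟨-q, e, hq.neg, he, hqe.neg_left, .inr (by rw [← neg_neg a, h]; abel)⟩

theorem IsStronglyNilClean.isNilpotent_sub_sq {a : R} (h : IsStronglyNilClean a) :
    IsNilpotent (a - a ^ 2) := by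
  obtain ⟨q, e, hq, he, hqe, rfl⟩ := h
  have hfactor : (q + e) - (q + e) ^ 2 = q * (1 - q - 2 * e) := by
    calc (q + e) - (q + e) ^ 2 = q * (1 - q - 2 * e) + (q * e - e * q) + (e - e * e) := by
          noncomm_ring
      _ = q * (1 - q - 2 * e) := by rw [hqe.eq, he.eq, sub_self, sub_self, add_zero, add_zero]
  rw [hfactor]
  refine Commute.isNilpotent_mul_right ?_ hq
  exact ((Commute.one_right q).sub_right (Commute.refl q)).sub_right
    ((Commute.ofNat_right q 2).mul_right hqe)

theorem X_sub_X_sq_dvd {m : ℕ} (hm : m ≠ 0) :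
    (X - X ^ 2 : ℤ[X]) ∣ X - (1 - (1 - X ^ m) ^ m) := by
  have h0 : X - C 0 ∣ (X - (1 - (1 - X ^ m) ^ m) : ℤ[X]) := dvd_iff_isRoot.2 (by simp [hm])
  have h1 : X - C 1 ∣ (X - (1 - (1 - X ^ m) ^ m) : ℤ[X]) := dvd_iff_isRoot.2 (by simp [hm])
  have hcop : IsCoprime (X - C 0 : ℤ[X]) (X - C 1) := isCoprime_X_sub_C_of_isUnit_sub (by simp)
  have hfactor : (X - X ^ 2 : ℤ[X]) = -((X - C 0) * (X - C 1)) := by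
    simp only [map_zero, map_one]
    ring
  rw [hfactor, neg_dvd]
  exact hcop.mul_dvd h0 h1

theorem isStronglyNilClean_of_isNilpotent_sub_sq {a : R} (h : IsNilpotent (a - a ^ 2)) :
    IsStronglyNilClean a := by
  obtain ⟨n, hn⟩ := h
  set m := n + 1
  have hm : (a - a ^ 2) ^ m = 0 := by rw [pow_succ, hn, zero_mul]
  set e := aeval a (1 - (1 - X ^ m) ^ m : ℤ[X])
  have he : IsIdempotentElem e := by
    simpa [e] using isIdempotentElem_one_sub_one_sub_pow_pow a m hm
  have hae : Commute a e := by simpa using (Commute.all (X : ℤ[X]) _).map (aeval a)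
  obtain ⟨g, hg⟩ := X_sub_X_sq_dvd (Nat.succ_ne_zero n)
  have hq : a - e = (a - a ^ 2) * aeval a g := by simpa [e] using congrArg (aeval a) hg
  have hcomm : Commute (a - a ^ 2) (aeval a g) := by
    have := (Commute.all (X - X ^ 2 : ℤ[X]) g).map (aeval a)
    rwa [map_sub, map_pow, aeval_X] at this
  refine ⟨a - e, e, ?_, he, hae.sub_left (Commute.refl e), (sub_add_cancel a e).symm⟩
  rw [hq]
  exact hcomm.isNilpotent_mul_right ⟨m, hm⟩

theorem isStronglyNilClean_iff_isNilpotent_sub_sq {a : R} :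
    IsStronglyNilClean a ↔ IsNilpotent (a - a ^ 2) :=
  ⟨IsStronglyNilClean.isNilpotent_sub_sq, isStronglyNilClean_of_isNilpotent_sub_sq⟩

theorem isSWNC_iff_isNilpotent {a : R} :
    IsSWNC a ↔ IsNilpotent (a - a ^ 2) ∨ IsNilpotent (-a - (-a) ^ 2) := by
  simp only [isSWNC_iff_isStronglyNilClean, isStronglyNilClean_iff_isNilpotent_sub_sq]

theorem IsSWNC.map {a : R} (f : R →+* S) (h : IsSWNC a) : IsSWNC (f a) := by
  obtain ⟨q, e, hq, he, hqe, hsum⟩ := h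
  refine ⟨f q, f e, hq.map f, he.map f, hqe.map f, ?_⟩
  rcases hsum with rfl | rfl
  · exact .inl (map_add f q e)
  · exact .inr (map_sub f q e)

theorem IsGSWNC.of_surjective {f : R →+* S} (hf : Function.Surjective f) (hR : IsGSWNC R) :
    IsGSWNC S := by
  intro b hb
  obtain ⟨a, rfl⟩ := hf b
  exact (hR a fun ha ↦ hb (ha.map f)).map f

theorem isNilpotent_of_isNilpotent_map {f : R →+* S}
    (hnil : ∀ x ∈ TwoSidedIdeal.ker f, IsNilpotent x) {x : R} (h : IsNilpotent (f x)) :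
    IsNilpotent x := by
  obtain ⟨n, hn⟩ := h
  exact IsNilpotent.of_pow (hnil _ (by rw [TwoSidedIdeal.mem_ker, map_pow, hn]))

theorem isSWNC_of_isSWNC_map {f : R →+* S} (hnil : ∀ x ∈ TwoSidedIdeal.ker f, IsNilpotent x)
    {a : R} (h : IsSWNC (f a)) : IsSWNC a := by
  rw [isSWNC_iff_isNilpotent] at h ⊢
  simp only [← map_neg, ← map_pow, ← map_sub] at h
  exact h.imp (isNilpotent_of_isNilpotent_map hnil) (isNilpotent_of_isNilpotent_map hnil)

theorem exists_mul_one_sub_eq_one_of_mem_jacobson {x : R} (hx : x ∈ Ideal.jacobson (⊥ : Ideal R)) :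
    ∃ s, s * (1 - x) = 1 := by
  obtain ⟨s, hs⟩ := Ideal.exists_mul_sub_mem_of_sub_one_mem_jacobson (1 - x)
    (by simpa using neg_mem hx)
  exact ⟨s, sub_eq_zero.1 ((Submodule.mem_bot R).1 hs)⟩

namespace TwoSidedIdeal

theorem isUnit_one_sub_of_le_jacobson {I : TwoSidedIdeal R}
    (hI : ∀ x ∈ I, x ∈ Ideal.jacobson (⊥ : Ideal R)) {x : R} (hx : x ∈ I) : IsUnit (1 - x) := by
  obtain ⟨s, hs⟩ := exists_mul_one_sub_eq_one_of_mem_jacobson (hI x hx)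
  -- `s = 1 + s x` is again of the form `1 - y` with `y ∈ I`, so it has a left inverse too.
  have hs' : 1 - -(s * x) = s := by rw [sub_neg_eq_add, ← hs, mul_one_sub, sub_add_cancel]
  obtain ⟨t, ht⟩ := exists_mul_one_sub_eq_one_of_mem_jacobson
    (hI _ (I.neg_mem (I.mul_mem_left s x hx)))
  rw [hs'] at ht
  exact isUnit_iff_exists.2 ⟨s, left_inv_eq_right_inv ht hs ▸ ht, hs⟩

theorem isNilpotent_of_isNilpotent_sub_sq_of_le_jacobson {I : TwoSidedIdeal R}
    (hI : ∀ x ∈ I, x ∈ Ideal.jacobson (⊥ : Ideal R)) {x : R} (hx : x ∈ I)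
    (h : IsNilpotent (x - x ^ 2)) : IsNilpotent x := by
  have hcomm : Commute x (1 - x) := (Commute.one_right x).sub_right (Commute.refl x)
  rwa [sq, ← mul_one_sub, (isUnit_one_sub_of_le_jacobson hI hx).isNilpotent_mul_unit_of_commute_iff
    hcomm] at h

end TwoSidedIdeal

theorem IsGSWNC.isNilpotent_of_mem {I : TwoSidedIdeal R}
    (hI : ∀ x ∈ I, x ∈ Ideal.jacobson (⊥ : Ideal R)) (hR : IsGSWNC R) {x : R} (hx : x ∈ I) :
    IsNilpotent x := by
  nontriviality R
  have hunit : ¬IsUnit x := fun hu ↦ by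
    have h1 : (1 : R) ∈ I := by simpa using I.mul_mem_right x ↑hu.unit⁻¹ hx
    exact not_isUnit_zero (sub_self (1 : R) ▸ TwoSidedIdeal.isUnit_one_sub_of_le_jacobson hI h1)
  rcases isSWNC_iff_isNilpotent.1 (hR x hunit) with h | h
  · exact TwoSidedIdeal.isNilpotent_of_isNilpotent_sub_sq_of_le_jacobson hI hx h
  · exact isNilpotent_neg_iff.1
      (TwoSidedIdeal.isNilpotent_of_isNilpotent_sub_sq_of_le_jacobson hI (I.neg_mem hx) h)

theorem isUnit_of_isUnit_map {f : R →+* S} (hf : Function.Surjective f)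
    (hker : ∀ x ∈ TwoSidedIdeal.ker f, x ∈ Ideal.jacobson (⊥ : Ideal R)) {a : R}
    (ha : IsUnit (f a)) : IsUnit a := by
  obtain ⟨b, hb⟩ := hf ↑ha.unit⁻¹
  have hunit {c d : R} (hcd : f c * f d = 1) : IsUnit (c * d) := by
    simpa using TwoSidedIdeal.isUnit_one_sub_of_le_jacobson hker (x := 1 - c * d)
      (by simp [TwoSidedIdeal.mem_ker, hcd])
  obtain ⟨u, hu⟩ := hunit (c := a) (d := b) (by simp [hb])
  obtain ⟨v, hv⟩ := hunit (c := b) (d := a) (by simp [hb])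
  exact isUnit_iff_exists_and_exists.2
    ⟨⟨b * ↑u⁻¹, by rw [← mul_assoc, ← hu, u.mul_inv]⟩,
      ⟨↑v⁻¹ * b, by rw [mul_assoc, ← hv, v.inv_mul]⟩⟩

theorem isGSWNC_of_surjective_of_ker_nil {f : R →+* S} (hf : Function.Surjective f)
    (hker : ∀ x ∈ TwoSidedIdeal.ker f, x ∈ Ideal.jacobson (⊥ : Ideal R))
    (hnil : ∀ x ∈ TwoSidedIdeal.ker f, IsNilpotent x) (hS : IsGSWNC S) : IsGSWNC R :=
  fun a ha ↦ isSWNC_of_isSWNC_map hnil (hS (f a) fun hfa ↦ ha (isUnit_of_isUnit_map hf hker hfa))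

end

theorem stmt6 {R : Type*} [Ring R] (J : TwoSidedIdeal R)
    (hJ : ∀ x : R, x ∈ J ↔ x ∈ Ideal.jacobson (⊥ : Ideal R)) :
    IsGSWNC R ↔ ((∀ x ∈ J, IsNilpotent x) ∧ IsGSWNC J.ringCon.Quotient) := by
  have hJrad : ∀ x ∈ J, x ∈ Ideal.jacobson (⊥ : Ideal R) := fun x ↦ (hJ x).1
  have hker := TwoSidedIdeal.ker_ringCon_mk' J
  exact ⟨fun hR ↦ ⟨fun x ↦ hR.isNilpotent_of_mem hJrad, hR.of_surjective J.ringCon.mk'_surjective⟩,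
    fun ⟨hnil, hQ⟩ ↦ isGSWNC_of_surjective_of_ker_nil J.ringCon.mk'_surjective
      (by rwa [hker]) (by rwa [hker]) hQ⟩
end

section
/- If R is a GSWNC ring and e is a nonzero idempotent of R, then the corner ring eRe is GSWNC. -/
/-- The corner ring eRe, as a non-unital subring of R. -/
def cornerRing {R : Type*} [Ring R] (e : R) (he : IsIdempotentElem e) : NonUnitalSubring R where
  carrier := {x : R | e * x * e = x}
  add_mem' := by
    intro x y hx hy
    simp only [Set.mem_setOf_eq] at *
    rw [mul_add, add_mul, hx, hy]
  zero_mem' := by simp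
  neg_mem' := by
    intro x hx
    simp only [Set.mem_setOf_eq] at *
    rw [mul_neg, neg_mul, hx]
  mul_mem' := by
    intro x y hx hy
    simp only [Set.mem_setOf_eq] at *
    have h1 : e * x = x := by
      rw [← hx, ← mul_assoc, ← mul_assoc, he.eq]
    have h2 : y * e = y := by
      rw [← hy, mul_assoc (e * y) e e, he.eq]
    calc e * (x * y) * e = (e * x) * (y * e) := by noncomm_ring
      _ = x * y := by rw [h1, h2]

open Finset

theorem isNilpotent_add_sub_sq_of_commute {R : Type*} [Ring R] {q g : R} (hq : IsNilpotent q)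
    (hg : IsIdempotentElem g) (hqg : Commute q g) : IsNilpotent ((q + g) - (q + g) ^ 2) := by
  have h : (q + g) - (q + g) ^ 2 = q * (1 - q - g - g) := by
    rw [sq, add_mul, mul_add, mul_add, hg.eq, ← hqg.eq]
    noncomm_ring
  rw [h]
  exact Commute.isNilpotent_mul_right
    ((((Commute.one_right q).sub_right (Commute.refl q)).sub_right hqg).sub_right hqg) hq

theorem IsSWNC.isNilpotent_sub_sq_or_isNilpotent_neg_sub_sq {R : Type*} [Ring R] {a : R}
    (ha : IsSWNC a) : IsNilpotent (a - a ^ 2) ∨ IsNilpotent (-a - (-a) ^ 2) := by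
  obtain ⟨q, g, hq, hg, hqg, rfl | rfl⟩ := ha
  · exact .inl (isNilpotent_add_sub_sq_of_commute hq hg hqg)
  · rw [neg_sub', sub_neg_eq_add]
    exact .inr (isNilpotent_add_sub_sq_of_commute hq.neg hg hqg.neg_left)

theorem exists_isIdempotentElem_isNilpotent_sub_mul_of_isNilpotent_sub_sq {R : Type*} [CommRing R]
    {x : R} (hx : IsNilpotent (x - x ^ 2)) :
    ∃ t : R, IsIdempotentElem (x * t) ∧ IsNilpotent (x - x * t) := by
  obtain ⟨n, hn⟩ := hx
  have hm : (x - x ^ 2) ^ (n + 1) = 0 := by rw [pow_succ, hn, zero_mul]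
  have hf := isIdempotentElem_one_sub_one_sub_pow_pow x (n + 1) hm
  have hu := mul_neg_geom_sum (1 - x ^ (n + 1)) (n + 1)
  rw [sub_sub_cancel] at hu
  have hv : 1 - (1 - (1 - x ^ (n + 1)) ^ (n + 1)) =
      (1 - x) ^ (n + 1) * (∑ i ∈ range (n + 1), x ^ i) ^ (n + 1) := by
    rw [sub_sub_cancel, ← mul_neg_geom_sum, mul_pow]
  -- `f` is a multiple of `x ^ (n + 1)` and `1 - f` one of `(1 - x) ^ (n + 1)`, so `x (1 - f)` and
  -- `(1 - x) f` are nilpotent, and `x - f` is their difference.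
  generalize 1 - (1 - x ^ (n + 1)) ^ (n + 1) = f at hf hu hv
  generalize ∑ i ∈ range (n + 1), (1 - x ^ (n + 1)) ^ i = u at hu
  refine ⟨x ^ n * u, by rwa [← mul_assoc, ← pow_succ', hu], ?_⟩
  rw [← mul_assoc, ← pow_succ', hu]
  have h1 : IsNilpotent (x * (1 - f)) := by
    refine ⟨n + 1, ?_⟩
    rw [mul_pow, hf.one_sub.pow_succ_eq, hv, ← mul_assoc, ← mul_pow,
      show x * (1 - x) = x - x ^ 2 by ring, hm, zero_mul]
  have h2 : IsNilpotent ((1 - x) * f) := by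
    refine ⟨n + 1, ?_⟩
    rw [mul_pow, hf.pow_succ_eq, ← hu, ← mul_assoc, ← mul_pow,
      show (1 - x) * x = x - x ^ 2 by ring, hm, zero_mul]
  convert (Commute.all _ _).isNilpotent_sub h1 h2 using 1
  ring

open scoped IsMulCommutative in
theorem exists_commute_isIdempotentElem_isNilpotent_sub_mul_of_isNilpotent_sub_sq {R : Type*}
    [Ring R] {x : R} (hx : IsNilpotent (x - x ^ 2)) :
    ∃ t : R, Commute x t ∧ IsIdempotentElem (x * t) ∧ IsNilpotent (x - x * t) := by
  let S := Subring.closure {x}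
  have : IsMulCommutative S := Subring.isMulCommutative_closure (by simp)
  have hxS : x ∈ S := Subring.subset_closure rfl
  have hinj : Function.Injective S.subtype := Subtype.val_injective
  obtain ⟨t, ht, hnil⟩ := exists_isIdempotentElem_isNilpotent_sub_mul_of_isNilpotent_sub_sq
    (x := ⟨x, hxS⟩) ((IsNilpotent.map_iff hinj).mp hx)
  exact ⟨t, congrArg Subtype.val (mul_comm (⟨x, hxS⟩ : S) t), congrArg Subtype.val ht,
    hnil.map S.subtype⟩

section cornerRing

variable {R : Type*} [Ring R] {e : R} (he : IsIdempotentElem e)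

theorem mem_cornerRing_iff {x : R} : x ∈ cornerRing e he ↔ e * x = x ∧ x * e = x := by
  refine ⟨fun hx ↦ ⟨?_, ?_⟩, fun ⟨hl, hr⟩ ↦ ?_⟩
  · rw [← hx.out, ← mul_assoc, ← mul_assoc, he.eq]
  · rw [← hx.out, mul_assoc _ e e, he.eq]
  · show e * x * e = x
    rw [hl, hr]

theorem mul_mem_cornerRing_of_commute {x t : R} (hx : x ∈ cornerRing e he) (hxt : Commute x t) :
    x * t ∈ cornerRing e he := by
  obtain ⟨hl, hr⟩ := (mem_cornerRing_iff he).mp hx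
  rw [mem_cornerRing_iff he, ← mul_assoc, hl, hxt.eq, mul_assoc, hr]
  exact ⟨rfl, rfl⟩

theorem exists_isIdempotentElem_isNilpotent_sub_of_mem_cornerRing (x : cornerRing e he)
    (hx : IsNilpotent ((x : R) - x ^ 2)) :
    ∃ f : cornerRing e he, f * f = f ∧ x * f = f * x ∧ IsNilpotent ((x : R) - f) := by
  obtain ⟨t, hxt, hidem, hnil⟩ :=
    exists_commute_isIdempotentElem_isNilpotent_sub_mul_of_isNilpotent_sub_sq hx
  exact ⟨⟨x * t, mul_mem_cornerRing_of_commute he x.2 hxt⟩, Subtype.ext hidem,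
    Subtype.ext ((Commute.refl (x : R)).mul_right hxt).eq, hnil⟩

theorem exists_inv_of_isUnit_of_mem_cornerRing (a : cornerRing e he) (ha : IsUnit (a : R)) :
    ∃ b : cornerRing e he, (a : R) * b = e ∧ (b : R) * a = e := by
  obtain ⟨u, hu⟩ := ha
  have he1 : e = 1 := calc
    e = ↑u⁻¹ * a * e := by rw [← hu, u.inv_mul, one_mul]
    _ = 1 := by rw [mul_assoc, ((mem_cornerRing_iff he).mp a.2).2, ← hu, u.inv_mul]
  subst he1
  refine ⟨⟨↑u⁻¹, (mem_cornerRing_iff he).mpr ⟨one_mul _, mul_one _⟩⟩, ?_, ?_⟩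
  · rw [← hu, u.mul_inv]
  · rw [← hu, u.inv_mul]

end cornerRing

theorem stmt7_general {R : Type*} [Ring R] (hR : IsGSWNC R) (e : R) (he : IsIdempotentElem e) :
    ∀ a : cornerRing e he,
      ¬ (∃ b : cornerRing e he, (a : R) * b = e ∧ (b : R) * a = e) →
      ∃ q f : cornerRing e he, IsNilpotent (q : R) ∧ (f * f = f) ∧ (q * f = f * q) ∧
        (a = q + f ∨ a = q - f) := by
  intro a ha
  have hunit : ¬ IsUnit (a : R) := fun h ↦ ha (exists_inv_of_isUnit_of_mem_cornerRing he a h)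
  rcases (hR _ hunit).isNilpotent_sub_sq_or_isNilpotent_neg_sub_sq with h | h
  · obtain ⟨f, hf, haf, hnil⟩ := exists_isIdempotentElem_isNilpotent_sub_of_mem_cornerRing he a h
    refine ⟨a - f, f, hnil, hf, ?_, .inl (sub_add_cancel a f).symm⟩
    rw [sub_mul, mul_sub, haf]
  · obtain ⟨f, hf, haf, hnil⟩ :=
      exists_isIdempotentElem_isNilpotent_sub_of_mem_cornerRing he (-a) h
    rw [neg_mul, mul_neg, neg_inj] at haf
    refine ⟨a + f, f, ?_, hf, ?_, .inr (add_sub_cancel_right a f).symm⟩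
    · simpa [neg_sub_left, add_comm] using hnil.neg
    · rw [add_mul, mul_add, haf]

theorem stmt7 {R : Type*} [Ring R] (hR : IsGSWNC R) (e : R) (he : IsIdempotentElem e)
    (hne : e ≠ 0) :
    ∀ a : cornerRing e he,
      ¬ (∃ b : cornerRing e he, (a : R) * b = e ∧ (b : R) * a = e) →
      ∃ q f : cornerRing e he, IsNilpotent (q : R) ∧ (f * f = f) ∧ (q * f = f * q) ∧
        (a = q + f ∨ a = q - f) :=
  stmt7_general hR e he
end

section
/- Every GSWNC ring is Dedekind-finite: if ab = 1 then ba = 1. -/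
/-!
If `y * x = 1` and `x = q ± e` is strongly weakly nil-clean, then `x` commutes with the idempotent
`1 - e` and `x * (1 - e) = q * (1 - e)` is nilpotent. Cancelling a power of the left-invertible `x`
forces `1 - e = 0`, so `x = q ± 1` is a unit. Hence in a GSWNC ring every element with a left
inverse is a unit, which is Dedekind-finiteness.
-/

theorem IsDedekindFiniteMonoid.of_isUnit_of_mul_eq_one {M : Type*} [Monoid M]
    (h : ∀ a b : M, a * b = 1 → IsUnit b) : IsDedekindFiniteMonoid M where
  mul_eq_one_symm {a b} hab := by
    obtain ⟨u, rfl⟩ := h a b hab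
    rw [Units.mul_eq_one_iff_eq_inv] at hab
    rw [hab, Units.mul_inv]

theorem IsIdempotentElem.eq_zero_of_isNilpotent_mul {M : Type*} [MonoidWithZero M] {x y f : M}
    (hyx : y * x = 1) (hf : IsIdempotentElem f) (hxf : Commute x f)
    (hnil : IsNilpotent (x * f)) : f = 0 := by
  obtain ⟨n, hn⟩ := hnil
  calc f = y ^ (n + 1) * x ^ (n + 1) * f ^ (n + 1) := by
        rw [pow_mul_pow_eq_one _ hyx, one_mul, hf.pow_succ_eq]
    _ = y ^ (n + 1) * (x * f) ^ (n + 1) := by rw [mul_assoc, hxf.mul_pow]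
    _ = 0 := by rw [pow_succ (x * f), hn, zero_mul, mul_zero]

theorem IsSWNC.isUnit_of_mul_eq_one {R : Type*} [Ring R] {x y : R} (hx : IsSWNC x)
    (hyx : y * x = 1) : IsUnit x := by
  obtain ⟨q, e, hq, he, hqe, hx⟩ := hx
  have hxe : Commute x e := by
    rcases hx with rfl | rfl
    exacts [hqe.add_left (.refl e), hqe.sub_left (.refl e)]
  have hx_compl : x * (1 - e) = q * (1 - e) := by
    rcases hx with rfl | rfl <;> simp only [add_mul, sub_mul, mul_sub, mul_one, he.eq] <;> abel
  have he_one : e = 1 := by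
    have hnil : IsNilpotent (x * (1 - e)) :=
      hx_compl ▸ ((Commute.one_right q).sub_right hqe).isNilpotent_mul_right hq
    have := he.one_sub.eq_zero_of_isNilpotent_mul hyx
      ((Commute.one_right x).sub_right hxe) hnil
    exact (sub_eq_zero.mp this).symm
  subst he_one
  rcases hx with rfl | rfl
  exacts [hq.isUnit_add_one, hq.isUnit_sub_one]

theorem IsGSWNC.isDedekindFiniteMonoid {R : Type*} [Ring R] (h : IsGSWNC R) :
    IsDedekindFiniteMonoid R :=
  .of_isUnit_of_mul_eq_one fun _ b hab =>
    by_contra fun hb => hb ((h b hb).isUnit_of_mul_eq_one hab)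

theorem stmt9 {R : Type*} [Ring R] (h : IsGSWNC R) :
    ∀ a b : R, a * b = 1 → b * a = 1 := by
  have := h.isDedekindFiniteMonoid
  exact fun _ _ => mul_eq_one_symm
end

section
/- Let R be a ring whose only idempotents are 0 and 1. Then R is GSWNC if and only if R is local with nil Jacobson radical. -/
section

variable {R : Type*} [Ring R]

theorem IsNilpotent.isSWNC {a : R} (ha : IsNilpotent a) : IsSWNC a :=
  ⟨a, 0, ha, .zero, .zero_right a, .inl (add_zero a).symm⟩

theorem IsSWNC.isNilpotent_of_not_isUnit (h : ∀ e : R, IsIdempotentElem e → e = 0 ∨ e = 1)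
    {a : R} (ha : IsSWNC a) (hu : ¬IsUnit a) : IsNilpotent a := by
  obtain ⟨q, e, hq, he, -, hqe⟩ := ha
  rcases h e he with rfl | rfl
  · rcases hqe with rfl | rfl
    · simpa using hq
    · simpa using hq
  · rcases hqe with rfl | rfl
    · exact absurd hq.isUnit_add_one hu
    · exact absurd hq.isUnit_sub_one hu

theorem isLocalRing_of_forall_not_isUnit_isNilpotent [Nontrivial R]
    (h : ∀ a : R, ¬IsUnit a → IsNilpotent a) : IsLocalRing R :=
  .of_isUnit_or_isUnit_one_sub_self fun a ↦
    or_iff_not_imp_left.2 fun ha ↦ (h a ha).isUnit_one_sub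

theorem not_isUnit_of_mem_jacobson_bot [Nontrivial R] {x : R}
    (hx : x ∈ Ideal.jacobson (⊥ : Ideal R)) : ¬IsUnit x := fun hu ↦
  bot_ne_top (Ideal.jacobson_eq_top_iff.1 (Ideal.eq_top_of_isUnit_mem _ hx hu))

/-- Local rings are Dedekind-finite: if `a * b = 1` then `b * a` is an idempotent, and one of
`b * a` and `1 - b * a` is a unit; the latter is impossible since it is killed by `a ≠ 0`. -/
instance IsLocalRing.isDedekindFiniteMonoid [IsLocalRing R] : IsDedekindFiniteMonoid R where
  mul_eq_one_symm {a b} hab := by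
    have hidem : IsIdempotentElem (b * a) := by
      rw [IsIdempotentElem, mul_assoc, ← mul_assoc a, hab, one_mul]
    rcases IsLocalRing.isUnit_or_isUnit_of_add_one (add_sub_cancel (b * a) 1) with hu | hu
    · exact (IsIdempotentElem.iff_eq_one_of_isUnit hu).1 hidem
    · have ha : a * (1 - b * a) = 0 := by rw [mul_sub, mul_one, ← mul_assoc, hab, one_mul, sub_self]
      rw [hu.mul_left_eq_zero.1 ha, zero_mul] at hab
      exact absurd hab zero_ne_one

theorem IsLocalRing.mem_jacobson_bot_of_not_isUnit [IsLocalRing R] {a : R} (ha : ¬IsUnit a) :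
    a ∈ Ideal.jacobson (⊥ : Ideal R) := by
  refine Ideal.mem_jacobson_iff.2 fun y ↦ ?_
  have hunit : IsUnit (y * a + 1) := by
    refine (IsLocalRing.isUnit_or_isUnit_of_add_one (neg_add_cancel_left (y * a) 1)).resolve_left ?_
    rintro ⟨u, hu⟩
    refine ha (.of_mul_eq_one_right (-(↑u⁻¹ * y)) ?_)
    rw [neg_mul, mul_assoc, ← mul_neg, ← hu, Units.inv_mul]
  obtain ⟨z, hz⟩ := hunit.exists_left_inv
  refine ⟨z, ?_⟩
  rw [Ideal.mem_bot, mul_assoc, ← mul_add_one, hz, sub_self]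

end

theorem stmt12 {R : Type*} [Ring R] [Nontrivial R]
    (h : ∀ e : R, IsIdempotentElem e → e = 0 ∨ e = 1) :
    IsGSWNC R ↔ (IsLocalRing R ∧ ∀ x ∈ Ideal.jacobson (⊥ : Ideal R), IsNilpotent x) := by
  constructor
  · intro hg
    have hnil (a : R) (ha : ¬IsUnit a) : IsNilpotent a := (hg a ha).isNilpotent_of_not_isUnit h ha
    exact ⟨isLocalRing_of_forall_not_isUnit_isNilpotent hnil,
      fun x hx ↦ hnil x (not_isUnit_of_mem_jacobson_bot hx)⟩
  · rintro ⟨hloc, hjac⟩ a ha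
    exact (hjac a (IsLocalRing.mem_jacobson_bot_of_not_isUnit ha)).isSWNC
end

section
/- If R is a GSWNC ring and 2 is not a unit of R, then either 2 is nilpotent or 6 is nilpotent in R. -/
/-! If `a = q ± e` with `q` nilpotent and `e` a commuting idempotent, then `a² ∓ a` is `q` times
an element commuting with `q`, hence nilpotent. For `a = 2` these are `2` and `6`. -/

section

variable {R : Type*} [Ring R] {q e : R}

theorem isNilpotent_sq_sub_self_of_add (hq : IsNilpotent q) (he : IsIdempotentElem e)
    (hc : Commute q e) : IsNilpotent ((q + e) ^ 2 - (q + e)) := by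
  have hfactor : (q + e) ^ 2 - (q + e) = q * (q + 2 * e - 1) := by
    rw [sq, add_mul, mul_add, mul_add, he.eq, hc.symm.eq]
    noncomm_ring
  rw [hfactor]
  exact (((Commute.refl q).add_right ((Commute.ofNat_right q 2).mul_right hc)).sub_right
    (Commute.one_right q)).isNilpotent_mul_right hq

theorem isNilpotent_sq_add_self_of_sub (hq : IsNilpotent q) (he : IsIdempotentElem e)
    (hc : Commute q e) : IsNilpotent ((q - e) ^ 2 + (q - e)) := by
  have hfactor : (q - e) ^ 2 + (q - e) = q * (q - 2 * e + 1) := by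
    rw [sq, sub_mul, mul_sub, mul_sub, he.eq, hc.symm.eq]
    noncomm_ring
  rw [hfactor]
  exact (((Commute.refl q).sub_right ((Commute.ofNat_right q 2).mul_right hc)).add_right
    (Commute.one_right q)).isNilpotent_mul_right hq

theorem IsSWNC.isNilpotent_sq_sub_self_or_sq_add_self {a : R} (ha : IsSWNC a) :
    IsNilpotent (a ^ 2 - a) ∨ IsNilpotent (a ^ 2 + a) := by
  obtain ⟨q, e, hq, he, hc, rfl | rfl⟩ := ha
  · exact .inl (isNilpotent_sq_sub_self_of_add hq he hc)
  · exact .inr (isNilpotent_sq_add_self_of_sub hq he hc)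

end

theorem stmt13 {R : Type*} [Ring R] (h : IsGSWNC R) (h2 : ¬ IsUnit (2 : R)) :
    IsNilpotent (2 : R) ∨ IsNilpotent (6 : R) := by
  have h22 : (2 : R) ^ 2 - 2 = 2 := by norm_num
  have h26 : (2 : R) ^ 2 + 2 = 6 := by norm_num
  simpa only [h22, h26] using (h 2 h2).isNilpotent_sq_sub_self_or_sq_add_self
end

section
/- Let R be a GSWNC ring in which 2 is a unit and every unit u satisfies u² = 1. Then R is commutative. -/
section

variable {R : Type*} [Ring R]

theorem isReduced_of_isUnit_two_of_forall_units_sq_eq_one (h2 : IsUnit (2 : R))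
    (hu : ∀ u : Rˣ, (u : R) ^ 2 = 1) : IsReduced R where
  eq_zero q hq := by
    have hsq : (1 + q) ^ 2 = 1 := hu hq.isUnit_one_add.unit
    have hq2 : q * (2 + q) = 0 := by
      rw [← sub_eq_zero.mpr hsq]
      noncomm_ring
    exact (IsUnit.mul_left_eq_zero
      (hq.isUnit_add_left_of_commute h2 (Commute.ofNat_right q 2))).mp hq2

theorem Units.commute_of_forall_sq_eq_one (hu : ∀ u : Rˣ, (u : R) ^ 2 = 1) (u v : Rˣ) :
    Commute (u : R) v :=
  Commute.units_val <| Commute.of_orderOf_dvd_two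
    (fun w => orderOf_dvd_of_pow_eq_one (Units.ext (by simpa using hu w))) u v

theorem IsReduced.mul_eq_zero_symm [IsReduced R] {x y : R} (h : x * y = 0) : y * x = 0 :=
  IsNilpotent.eq_zero ⟨2, by rw [sq, mul_assoc, ← mul_assoc x, h, zero_mul, mul_zero]⟩

theorem IsReduced.mul_mul_eq_zero [IsReduced R] {x y : R} (h : x * y = 0) (z : R) :
    x * z * y = 0 :=
  IsNilpotent.eq_zero ⟨2, by
    rw [sq, show x * z * y * (x * z * y) = x * z * (y * x) * z * y by noncomm_ring,
      IsReduced.mul_eq_zero_symm h, mul_zero, zero_mul, zero_mul]⟩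

theorem IsIdempotentElem.commute_of_isReduced [IsReduced R] {e : R} (he : IsIdempotentElem e)
    (a : R) : Commute e a := by
  have hleft : e * a * (1 - e) = 0 :=
    IsReduced.mul_mul_eq_zero (by rw [mul_sub, mul_one, he.eq, sub_self]) a
  have hright : (1 - e) * a * e = 0 :=
    IsReduced.mul_mul_eq_zero (by rw [sub_mul, one_mul, he.eq, sub_self]) a
  rw [mul_sub, mul_one, sub_eq_zero] at hleft
  rw [sub_mul, one_mul, sub_mul, sub_eq_zero] at hright
  exact hleft.trans hright.symm

theorem IsSWNC.commute_of_isReduced [IsReduced R] {a : R} (ha : IsSWNC a) (b : R) :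
    Commute a b := by
  obtain ⟨q, e, hq, he, -, rfl | rfl⟩ := ha <;>
    simpa [hq.eq_zero] using he.commute_of_isReduced b

end

theorem stmt16 {R : Type*} [Ring R] (h : IsGSWNC R) (h2 : IsUnit (2 : R))
    (hu : ∀ u : Rˣ, (u : R) ^ 2 = 1) :
    ∀ a b : R, a * b = b * a := by
  have : IsReduced R := isReduced_of_isUnit_two_of_forall_units_sq_eq_one h2 hu
  intro a b
  by_cases ha : IsUnit a
  · by_cases hb : IsUnit b
    · exact Units.commute_of_forall_sq_eq_one hu ha.unit hb.unit
    · exact ((h b hb).commute_of_isReduced a).symm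
  · exact (h a ha).commute_of_isReduced b
end

section
/- If R is a GSWNC ring, then for every n > 2 there does not exist a nonzero idempotent e ∈ R such that eRe is isomorphic to the matrix ring Mₙ(S) for some nonzero ring S. -/
open Matrix

section SWNC

variable {R : Type*} [Ring R]

lemma Commute.isNilpotent_mul_self_sub_of_isIdempotentElem {q g : R} (hqg : Commute q g)
    (hq : IsNilpotent q) (hg : IsIdempotentElem g) :
    IsNilpotent ((q + g) * (q + g) - (q + g)) := by
  have hfactor : (q + g) * (q + g) - (q + g) = q * (q + g + g - 1) := by
    simp only [mul_add, add_mul, mul_sub, mul_one, hg.eq, hqg.symm.eq]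
    abel
  rw [hfactor]
  exact ((((Commute.refl q).add_right hqg).add_right hqg).sub_right
    (Commute.one_right q)).isNilpotent_mul_right hq

lemma IsSWNC.isNilpotent_mul_self_sub_or_add {a : R} (ha : IsSWNC a) :
    IsNilpotent (a * a - a) ∨ IsNilpotent (a * a + a) := by
  obtain ⟨q, g, hq, hg, hqg, rfl | rfl⟩ := ha
  · exact .inl (hqg.isNilpotent_mul_self_sub_of_isIdempotentElem hq hg)
  · refine .inr ?_
    convert hqg.neg_left.isNilpotent_mul_self_sub_of_isIdempotentElem hq.neg hg using 1
    noncomm_ring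

lemma IsGSWNC.eq_zero_of_mul_self_sub_eq (hR : IsGSWNC R) {a z p : R} (hz : z ≠ 0)
    (haz : a * z = 0) (hp : IsIdempotentElem p) (hsub : a * a - a = p) (hpa : p * a = a)
    (hap : a * p = a) : p = 0 := by
  have ha : ¬ IsUnit a := fun hu => hz (hu.mul_right_eq_zero.mp haz)
  have hsq : a * a = a + p := by rw [← hsub]; abel
  rcases (hR a ha).isNilpotent_mul_self_sub_or_add with h | h
  · exact hp.eq_zero_of_isNilpotent (hsub ▸ h)
  · have hinv : (a * a + a) * (2 • a - 3 • p) = p := by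
      simp only [add_mul, mul_sub, mul_smul_comm, hsq, hap, hpa, hp.eq]
      abel
    have hinv' : (2 • a - 3 • p) * (a * a + a) = p := by
      simp only [mul_add, sub_mul, smul_mul_assoc, hsq, hap, hpa, hp.eq]
      abel
    have hcomm : Commute (a * a + a) (2 • a - 3 • p) := hinv.trans hinv'.symm
    exact hp.eq_zero_of_isNilpotent (hinv ▸ hcomm.isNilpotent_mul_right h)

end SWNC

section FibonacciBlock

variable {ι S : Type*} [DecidableEq ι] [Ring S] {i j k : ι}

/-- The matrix `[[0,1],[1,1]]` placed in rows and columns `i, j`. -/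
def fibBlock (i j : ι) : Matrix ι ι S := single i j 1 + single j i 1 + single j j 1

def blockOne (i j : ι) : Matrix ι ι S := single i i 1 + single j j 1

lemma blockOne_ne_zero [Nontrivial S] (hij : i ≠ j) : (blockOne i j : Matrix ι ι S) ≠ 0 := by
  intro h
  simpa [blockOne, single_apply, hij.symm] using congrFun (congrFun h i) i

variable [Fintype ι]

lemma isIdempotentElem_blockOne (hij : i ≠ j) :
    IsIdempotentElem (blockOne i j : Matrix ι ι S) := by
  simp [IsIdempotentElem, blockOne, mul_add, add_mul, single_mul_single_of_ne, hij, hij.symm]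

lemma fibBlock_mul_self_sub (hij : i ≠ j) :
    fibBlock i j * fibBlock i j - fibBlock i j = (blockOne i j : Matrix ι ι S) := by
  simp [fibBlock, blockOne, mul_add, add_mul, single_mul_single_of_ne, hij, hij.symm]
  abel

lemma blockOne_mul_fibBlock (hij : i ≠ j) :
    blockOne i j * fibBlock i j = (fibBlock i j : Matrix ι ι S) := by
  simp [fibBlock, blockOne, mul_add, add_mul, single_mul_single_of_ne, hij, hij.symm]

lemma fibBlock_mul_blockOne (hij : i ≠ j) :
    fibBlock i j * blockOne i j = (fibBlock i j : Matrix ι ι S) := by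
  simp [fibBlock, blockOne, mul_add, add_mul, single_mul_single_of_ne, hij, hij.symm]
  abel

lemma fibBlock_mul_single_self (hik : i ≠ k) (hjk : j ≠ k) :
    fibBlock i j * single k k (1 : S) = 0 := by
  simp [fibBlock, add_mul, single_mul_single_of_ne, hik, hjk]

end FibonacciBlock

theorem IsGSWNC.not_injective_nonUnitalRingHom_matrix {R : Type*} [Ring R] (hR : IsGSWNC R)
    {ι S : Type*} [Fintype ι] [DecidableEq ι] [Ring S] [Nontrivial S] {i j k : ι} (hij : i ≠ j)
    (hik : i ≠ k) (hjk : j ≠ k) (φ : Matrix ι ι S →ₙ+* R) : ¬ Function.Injective φ := by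
  intro hφ
  have hz : single k k (1 : S) ≠ 0 := fun h => by simpa using congrFun (congrFun h k) k
  refine (map_ne_zero_iff φ hφ).mpr (blockOne_ne_zero hij) <|
    hR.eq_zero_of_mul_self_sub_eq (a := φ (fibBlock i j)) ((map_ne_zero_iff φ hφ).mpr hz) ?_
      ((isIdempotentElem_blockOne hij).map φ) ?_ ?_ ?_
  · rw [← map_mul, fibBlock_mul_single_self hik hjk, map_zero]
  · rw [← map_mul, ← map_sub, fibBlock_mul_self_sub hij]
  · rw [← map_mul, blockOne_mul_fibBlock hij]
  · rw [← map_mul, fibBlock_mul_blockOne hij]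

theorem stmt19 {R : Type*} [Ring R] (hR : IsGSWNC R) (n : ℕ) (hn : 2 < n) :
    ¬ ∃ (e : R) (he : IsIdempotentElem e), e ≠ 0 ∧
      ∃ (S : Type) (_ : Ring S) (_ : Nontrivial S),
        Nonempty (cornerRing e he ≃+* Matrix (Fin n) (Fin n) S) := by
  rintro ⟨e, he, -, S, _, _, ⟨f⟩⟩
  exact hR.not_injective_nonUnitalRingHom_matrix (i := (⟨0, by omega⟩ : Fin n))
    (j := ⟨1, by omega⟩) (k := ⟨2, by omega⟩) (by simp) (by simp) (by simp)
    ((NonUnitalSubringClass.subtype (cornerRing e he)).comp f.symm.toNonUnitalRingHom)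
    (Subtype.val_injective.comp f.symm.injective)
end
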